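/- Let p, C > 0 and m ≥ 1. Suppose h : ℝⁿ → ℝ satisfies |h(y)| ≤ C/|y|^{2p} for |y| ≥ 1 and |h| ≤ C everywhere, and let G be a nonnegative kernel with ∫ G = 1 and G(z) ≤ C'/|z|^{2q} for some q > n/2 and constant C'. Then the convolution (h * G)(x) decays polynomially: there is a constant C'' with |(h*G)(x)| ≤ C''/|x|^{min(2p-1, 2q-n)} for |x| ≥ 2. -/

import Mathlib

/-!
Split `∫ h(y) G(x - y) dy` at the ball `‖y‖ ≤ ‖x‖/2`. On the ball `‖x - y‖ ≥ ‖x‖/2`, so `|h| ≤ C`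
and the decay of `G` bound that part by a multiple of `‖x‖^n / ‖x‖^(2q)`. Off the ball
`|h(y)| ≤ C (‖x‖/2)^(-2p)`, and `G(x - ·)` has mass one. Both exponents `2q - n` and `2p` are at
least the minimum in the statement.
-/

open MeasureTheory Metric

section Convolution

variable {E : Type*} [NormedAddCommGroup E] [MeasurableSpace E] [BorelSpace E]
  {μ : Measure E} {h G : E → ℝ} {x : E}

theorem setIntegral_abs_mul_sub_le_of_abs_le [SecondCountableTopology E]
    [μ.IsAddLeftInvariant] [μ.IsNegInvariant]
    (hG0 : ∀ z, 0 ≤ G z) (hGint : Integrable G μ) (hGmass : ∫ z, G z ∂μ = 1)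
    (hf : Integrable (fun y => h y * G (x - y)) μ) {S : Set E} (hS : MeasurableSet S)
    {a : ℝ} (ha : 0 ≤ a) (hha : ∀ y ∈ S, |h y| ≤ a) :
    ∫ y in S, |h y * G (x - y)| ∂μ ≤ a := by
  have hGx : Integrable (fun y => a * G (x - y)) μ := (hGint.comp_sub_left x).const_mul a
  calc ∫ y in S, |h y * G (x - y)| ∂μ ≤ ∫ y in S, a * G (x - y) ∂μ := by
        refine setIntegral_mono_on hf.abs.integrableOn hGx.integrableOn hS fun y hy => ?_
        rw [abs_mul, abs_of_nonneg (hG0 _)]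
        exact mul_le_mul_of_nonneg_right (hha y hy) (hG0 _)
    _ ≤ ∫ y, a * G (x - y) ∂μ :=
        setIntegral_le_integral hGx (Filter.Eventually.of_forall fun y => mul_nonneg ha (hG0 _))
    _ = a := by rw [integral_const_mul, integral_sub_left_eq_self G μ x, hGmass, mul_one]

theorem abs_integral_mul_sub_le_of_near_far [ProperSpace E]
    [μ.IsAddLeftInvariant] [μ.IsNegInvariant] [IsFiniteMeasureOnCompacts μ]
    (hG0 : ∀ z, 0 ≤ G z) (hGint : Integrable G μ) (hGmass : ∫ z, G z ∂μ = 1)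
    {R a b : ℝ} (ha : 0 ≤ a) (hb : 0 ≤ b)
    (hnear : ∀ y, ‖y‖ ≤ R → |h y| * G (x - y) ≤ b) (hfar : ∀ y, R < ‖y‖ → |h y| ≤ a) :
    |∫ y, h y * G (x - y) ∂μ| ≤ b * μ.real (closedBall 0 R) + a := by
  by_cases hf : Integrable (fun y => h y * G (x - y)) μ
  swap
  · rw [integral_undef hf, abs_zero]
    positivity
  have hball : ∫ y in closedBall 0 R, |h y * G (x - y)| ∂μ ≤ b * μ.real (closedBall 0 R) := by
    refine (le_abs_self _).trans <| norm_setIntegral_le_of_norm_le_const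
      (f := fun y => |h y * G (x - y)|) measure_closedBall_lt_top fun y hy => ?_
    rw [Real.norm_eq_abs, abs_abs, abs_mul, abs_of_nonneg (hG0 _)]
    exact hnear y (by simpa using hy)
  have hcompl : ∫ y in (closedBall 0 R)ᶜ, |h y * G (x - y)| ∂μ ≤ a :=
    setIntegral_abs_mul_sub_le_of_abs_le hG0 hGint hGmass hf measurableSet_closedBall.compl ha
      fun y hy => hfar y (by simpa using hy)
  calc |∫ y, h y * G (x - y) ∂μ| ≤ ∫ y, |h y * G (x - y)| ∂μ := abs_integral_le_integral_abs
    _ = (∫ y in closedBall 0 R, |h y * G (x - y)| ∂μ)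
          + ∫ y in (closedBall 0 R)ᶜ, |h y * G (x - y)| ∂μ :=
        (integral_add_compl measurableSet_closedBall hf.abs).symm
    _ ≤ b * μ.real (closedBall 0 R) + a := add_le_add hball hcompl

end Convolution

theorem div_half_rpow {t : ℝ} (ht : 0 ≤ t) (c s : ℝ) : c / (t / 2) ^ s = c * 2 ^ s / t ^ s := by
  rw [Real.div_rpow ht zero_le_two, div_div_eq_mul_div]

section Decay

open Module

variable {E : Type*} [NormedAddCommGroup E] [NormedSpace ℝ E] [FiniteDimensional ℝ E]
  [MeasurableSpace E] [BorelSpace E] {μ : Measure E} [μ.IsAddHaarMeasure]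

theorem abs_integral_mul_sub_le_of_decay {h G : E → ℝ} {p q C C' : ℝ} (hp : 0 ≤ p) (hq : 0 ≤ q)
    (hC : 0 ≤ C) (hC' : 0 ≤ C') (hh : ∀ y, 1 ≤ ‖y‖ → |h y| ≤ C / ‖y‖ ^ (2 * p))
    (hhb : ∀ y, |h y| ≤ C)
    (hG0 : ∀ z, 0 ≤ G z) (hGint : Integrable G μ) (hGmass : ∫ z, G z ∂μ = 1)
    (hGdecay : ∀ z, G z ≤ C' / ‖z‖ ^ (2 * q)) {x : E} (hx : 2 ≤ ‖x‖) :
    |∫ y, h y * G (x - y) ∂μ| ≤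
      C * C' * μ.real (closedBall 0 1) * 2 ^ (2 * q - finrank ℝ E) / ‖x‖ ^ (2 * q - finrank ℝ E)
        + C * 2 ^ (2 * p) / ‖x‖ ^ (2 * p) := by
  set R := ‖x‖ / 2
  have hR : 1 ≤ R := by simp only [R]; linarith
  have hnear : ∀ y, ‖y‖ ≤ R → |h y| * G (x - y) ≤ C * (C' / R ^ (2 * q)) := by
    intro y hy
    have hxy : R ≤ ‖x - y‖ := by have := norm_sub_norm_le x y; simp only [R] at hy ⊢; linarith
    exact mul_le_mul (hhb y) ((hGdecay _).trans (by gcongr)) (hG0 _) hC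
  have hfar : ∀ y, R < ‖y‖ → |h y| ≤ C / R ^ (2 * p) := fun y hy =>
    (hh y (hR.trans hy.le)).trans (by gcongr)
  calc |∫ y, h y * G (x - y) ∂μ|
      ≤ C * (C' / R ^ (2 * q)) * μ.real (closedBall 0 R) + C / R ^ (2 * p) :=
        abs_integral_mul_sub_le_of_near_far hG0 hGint hGmass (by positivity) (by positivity)
          hnear hfar
    _ = C * C' * μ.real (closedBall 0 1) / R ^ (2 * q - finrank ℝ E) + C / R ^ (2 * p) := by
        rw [Measure.addHaar_real_closedBall' μ 0 (by linarith), Real.rpow_sub (by linarith),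
          Real.rpow_natCast]
        field_simp
    _ = _ := by rw [div_half_rpow (by positivity), div_half_rpow (by positivity)]

end Decay

theorem convolution_polynomial_decay_general (n : ℕ)
    (p C : ℝ) (hp : 0 < p) (hC : 0 < C)
    (h G : EuclideanSpace ℝ (Fin n) → ℝ)
    (hh : ∀ y, 1 ≤ ‖y‖ → |h y| ≤ C / ‖y‖ ^ (2 * p))
    (hhb : ∀ y, |h y| ≤ C)
    (hG0 : ∀ z, 0 ≤ G z) (hGint : Integrable G) (hGmass : ∫ z, G z = 1)
    (q C' : ℝ) (hq : (n : ℝ) / 2 < q) (hC' : 0 < C')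
    (hGdecay : ∀ z, G z ≤ C' / ‖z‖ ^ (2 * q)) :
    ∃ C'' : ℝ, 0 < C'' ∧ ∀ x : EuclideanSpace ℝ (Fin n), 2 ≤ ‖x‖ →
      |∫ y, h y * G (x - y)| ≤ C'' / ‖x‖ ^ (min (2 * p - 1) (2 * q - n)) := by
  set K := volume.real (closedBall (0 : EuclideanSpace ℝ (Fin n)) 1)
  refine ⟨C * C' * K * 2 ^ (2 * q - n) + C * 2 ^ (2 * p), by positivity, fun x hx => ?_⟩
  have hq0 : 0 ≤ q := le_trans (by positivity) hq.le
  have hdecay := abs_integral_mul_sub_le_of_decay hp.le hq0 hC.le hC'.le hh hhb hG0 hGint hGmass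
    hGdecay hx
  rw [finrank_euclideanSpace_fin] at hdecay
  calc |∫ y, h y * G (x - y)|
      ≤ C * C' * K * 2 ^ (2 * q - n) / ‖x‖ ^ (2 * q - n) + C * 2 ^ (2 * p) / ‖x‖ ^ (2 * p) := hdecay
    _ ≤ C * C' * K * 2 ^ (2 * q - n) / ‖x‖ ^ (min (2 * p - 1) (2 * q - n))
          + C * 2 ^ (2 * p) / ‖x‖ ^ (min (2 * p - 1) (2 * q - n)) := by
        have hx1 : 1 ≤ ‖x‖ := by linarith
        gcongr
        · exact min_le_right _ _
        · exact (min_le_left _ _).trans (by linarith)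
    _ = _ := (add_div _ _ _).symm

/-- preservation of polynomial decay under convolution with a kernel
of mass one having polynomial decay. -/
theorem convolution_polynomial_decay (n : ℕ) (hn : 1 ≤ n) (m : ℕ) (hm : 1 ≤ m)
    (p C : ℝ) (hp : 0 < p) (hC : 0 < C)
    (h G : EuclideanSpace ℝ (Fin n) → ℝ)
    (hh : ∀ y, 1 ≤ ‖y‖ → |h y| ≤ C / ‖y‖ ^ (2 * p))
    (hhb : ∀ y, |h y| ≤ C)
    (hG0 : ∀ z, 0 ≤ G z) (hGint : Integrable G) (hGmass : ∫ z, G z = 1)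
    (q C' : ℝ) (hq : (n : ℝ) / 2 < q) (hC' : 0 < C')
    (hGdecay : ∀ z, G z ≤ C' / ‖z‖ ^ (2 * q)) :
    ∃ C'' : ℝ, 0 < C'' ∧ ∀ x : EuclideanSpace ℝ (Fin n), 2 ≤ ‖x‖ →
      |∫ y, h y * G (x - y)| ≤ C'' / ‖x‖ ^ (min (2 * p - 1) (2 * q - n)) :=
  convolution_polynomial_decay_general n p C hp hC h G hh hhb hG0 hGint hGmass q C' hq hC' hGdecay
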